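/- arXiv:2012.01920 — 3 statements merged into one kernel-verified Lean document; each statement's English description precedes it below -/
import Mathlib

section
/- There is an absolute constant c ≥ 1 for which the following holds: for all positive integers n and t with n ≤ t ≤ 2^n, there exists an ordered family S_1, …, S_t of subsets of {1, …, c·n²} such that |S_i| = n for every i ∈ [t] and |S_i ∩ S_j| ≤ log₂ t for every pair of distinct indices i, j ∈ [t]; that is, there exists a (t, c·n², n, log₂ t)-design. -/
/-!
Take a prime `q` with `n < q ≤ 2n` (Bertrand) and `k = ⌊log_q t⌋`, and fix an `n`-element set
`X ⊆ 𝔽_q`. The graphs `{(x, p x) : x ∈ X}` of the `q^(k+1) > t` polynomials `p` of degree `≤ k`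
are `n`-subsets of `𝔽_q²`, which has `q² ≤ 4n²` points. Two distinct graphs meet only where the
two polynomials agree, i.e. at the at most `k` roots of their difference, and `k ≤ log₂ t`.
-/

open Finset Polynomial

def IsDesign {ι α : Type*} [DecidableEq α] (S : ι → Finset α) (n : ℕ) (a : ℝ) : Prop :=
  (∀ i, #(S i) = n) ∧ ∀ i j, i ≠ j → (#(S i ∩ S j) : ℝ) ≤ a

namespace IsDesign

variable {ι κ α β : Type*} [DecidableEq α] {S : ι → Finset α} {n : ℕ} {a : ℝ}

theorem comp_embedding (h : IsDesign S n a) (e : κ ↪ ι) : IsDesign (S ∘ e) n a :=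
  ⟨fun i => h.1 (e i), fun i j hij => h.2 (e i) (e j) (e.injective.ne hij)⟩

theorem map [DecidableEq β] (h : IsDesign S n a) (f : α ↪ β) :
    IsDesign (fun i => (S i).map f) n a :=
  ⟨fun i => by rw [card_map, h.1 i], fun i j hij => by rw [← map_inter, card_map]; exact h.2 i j hij⟩

theorem mono {b : ℝ} (h : IsDesign S n a) (hab : a ≤ b) : IsDesign S n b :=
  ⟨h.1, fun i j hij => (h.2 i j hij).trans hab⟩

end IsDesign

namespace Finset

variable {α β : Type*}

def graphOn (s : Finset α) (f : α → β) : Finset (α × β) :=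
  s.map ⟨fun x => (x, f x), fun _ _ h => congrArg Prod.fst h⟩

@[simp]
theorem card_graphOn (s : Finset α) (f : α → β) : #(s.graphOn f) = #s := card_map _

@[simp]
theorem mem_graphOn {s : Finset α} {f : α → β} {x : α} {y : β} :
    (x, y) ∈ s.graphOn f ↔ x ∈ s ∧ f x = y := by
  refine mem_map.trans ⟨?_, fun ⟨hx, hy⟩ => ⟨x, hx, hy ▸ rfl⟩⟩
  rintro ⟨x, hx, h⟩
  obtain ⟨rfl, rfl⟩ := Prod.mk.inj h
  exact ⟨hx, rfl⟩

theorem graphOn_inter [DecidableEq α] [DecidableEq β] (s : Finset α) (f g : α → β)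
    [DecidablePred fun x => f x = g x] :
    s.graphOn f ∩ s.graphOn g = {x ∈ s | f x = g x}.graphOn f := by
  ext ⟨x, y⟩
  simp only [mem_inter, mem_graphOn, mem_filter]
  grind

end Finset

namespace Polynomial

variable {R : Type*} [CommRing R] [IsDomain R]

theorem card_filter_eval_eq_le [DecidableEq R] {p r : R[X]} (hpr : p ≠ r) (s : Finset R) :
    #{x ∈ s | p.eval x = r.eval x} ≤ (p - r).natDegree := by
  refine card_le_degree_of_subset_roots fun x hx => ?_
  rw [mem_val, mem_filter] at hx
  simp [mem_roots (sub_ne_zero.mpr hpr), hx.2]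

theorem isDesign_graphOn_eval [DecidableEq R] (s : Finset R) (k : ℕ) :
    IsDesign (fun p : degreeLT R (k + 1) => s.graphOn fun x => (p : R[X]).eval x) #s k := by
  refine ⟨fun p => card_graphOn _ _, fun p r hpr => ?_⟩
  have hpr' : (p : R[X]) ≠ r := Subtype.coe_injective.ne hpr
  have hdeg : (p - r : R[X]).natDegree ≤ k := by
    have := (degreeLT R (k + 1)).sub_mem p.2 r.2
    rw [mem_degreeLT] at this
    exact Nat.lt_succ_iff.mp ((natDegree_lt_iff_degree_lt (sub_ne_zero.mpr hpr')).mpr this)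
  rw [graphOn_inter, card_graphOn]
  exact_mod_cast (card_filter_eval_eq_le hpr' s).trans hdeg

end Polynomial

theorem Real.natLog_le_logb_two {b : ℕ} (hb : 2 ≤ b) (t : ℕ) :
    (Nat.log b t : ℝ) ≤ Real.logb 2 t :=
  (Nat.cast_le.mpr (Nat.log_anti_left one_lt_two hb)).trans (by exact_mod_cast natLog_le_logb t 2)

/-- **Nisan–Wigderson designs.** There is an absolute constant `c ≥ 1` such that
for all positive integers `n ≤ t ≤ 2^n` there is an ordered family `S_1, …, S_t` of subsets of
`{1, …, c·n²}` (modelled as `Fin (c * n²)`), each of size exactly `n`, with pairwise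
intersections of size at most `log₂ t`; i.e., a `(t, c·n², n, log₂ t)`-design exists. -/
theorem nw_design_exists :
    ∃ c : ℕ, 1 ≤ c ∧
      ∀ n t : ℕ, 0 < n → n ≤ t → t ≤ 2 ^ n →
        ∃ S : Fin t → Finset (Fin (c * n ^ 2)),
          (∀ i, (S i).card = n) ∧
          ∀ i j : Fin t, i ≠ j → ((S i ∩ S j).card : ℝ) ≤ Real.logb 2 t := by
  refine ⟨4, by norm_num, fun n t hn _ _ => ?_⟩
  obtain ⟨q, hq, hnq, hq2n⟩ := Nat.exists_prime_lt_and_le_two_mul n hn.ne'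
  have : Fact q.Prime := ⟨hq⟩
  set k := Nat.log q t
  have hindex : Fintype.card (Fin t) ≤ Fintype.card (Fin (k + 1) → ZMod q) := by
    simpa [ZMod.card] using (Nat.lt_pow_succ_log_self hq.one_lt t).le
  obtain ⟨e⟩ := Function.Embedding.nonempty_of_card_le hindex
  have hground : Fintype.card (ZMod q × ZMod q) ≤ Fintype.card (Fin (4 * n ^ 2)) := by
    simp only [Fintype.card_prod, ZMod.card, Fintype.card_fin]
    nlinarith
  obtain ⟨g⟩ := Function.Embedding.nonempty_of_card_le hground
  obtain ⟨X, -, hX⟩ := exists_subset_card_eq (s := (univ : Finset (ZMod q))) (n := n)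
    (by simpa [ZMod.card] using hnq.le)
  have hdesign := (((isDesign_graphOn_eval X k).comp_embedding
    (e.trans (degreeLTEquiv (ZMod q) (k + 1)).symm.toEmbedding)).map g).mono
    (Real.natLog_le_logb_two hq.two_le t)
  rw [hX] at hdesign
  exact ⟨_, hdesign⟩
end

section
/- Let 1 ≤ n ≤ t ≤ 2^n, let m = c·n² for the design constant c, let f : {0,1}^n → {0,1}, and let S_1,…,S_t be a (t, m, n, log₂ t)-design over [m] defining NW^f : {0,1}^m → {0,1}^t. Let D be an inherently probabilistic test on t-bit strings, and let γ > 0 satisfy |Pr_{s∼uniform({0,1}^m), D}[D(NW^f(s)) = 1] − Pr_{y∼uniform({0,1}^t), D}[D(y) = 1]| ≥ γ. For j ∈ {0,…,t−1}, d ∈ {0,1}, r ∈ {0,1}^{t−j}, and r' ∈ {0,1}^{m−n}, define the inherently probabilistic map A_{j,r,r',d} : {0,1}^n → {0,1} which, on input x, forms the seed s = s(x,r') ∈ {0,1}^m with s|_{S_{j+1}} = x and the remaining coordinates of s equal to r', computes NW^f(s)_1,…,NW^f(s)_j, samples b ∼ D(NW^f(s)_1,…,NW^f(s)_j, r_1,…,r_{t−j}),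 and outputs r_1 ⊕ d if b = 1 and r_1 ⊕ d ⊕ 1 otherwise. Then there exist j ∈ {0,…,t−1} and d ∈ {0,1} such that, with probability at least γ/t over independent uniform choices of r ∈ {0,1}^{t−j} and r' ∈ {0,1}^{m−n}, it holds that Pr_{x∼uniform({0,1}^n), D}[A_{j,r,r',d}(x) = f(x)] ≥ 1/2 + γ/(2t). -/
open Finset
open scoped Classical

/-- The Nisan–Wigderson generator `NW^f : {0,1}^m → {0,1}^t` associated with a function
`f : {0,1}^n → {0,1}` and a design `S_1, …, S_t` of `n`-element subsets of `[m]`: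
the `i`-th output bit is `f(z|_{S_i})`. -/
noncomputable def NWgen {n m t : ℕ} (f : (Fin n → Bool) → Bool)
    (S : Fin t → Finset (Fin m)) (hS : ∀ i, (S i).card = n)
    (z : Fin m → Bool) (i : Fin t) : Bool :=
  f fun a => z ↑((S i).orderIsoOfFin (hS i) a)

/-- The seed `s = s(x, r') ∈ {0,1}^m` with `s|_{S_j} = x` and the remaining `m - n`
coordinates of `s` (those outside `S_j`, in increasing order) equal to `r'`. -/
noncomputable def nwSeed {n m t : ℕ} (S : Fin t → Finset (Fin m)) (hS : ∀ i, (S i).card = n)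
    (j : Fin t) (x : Fin n → Bool) (r' : Fin (m - n) → Bool) : Fin m → Bool :=
  fun i =>
    if h : i ∈ S j then x (((S j).orderIsoOfFin (hS j)).symm ⟨i, h⟩)
    else
      r' (((S j)ᶜ.orderIsoOfFin
            (by rw [Finset.card_compl, hS j, Fintype.card_fin])).symm
          ⟨i, Finset.mem_compl.mpr h⟩)

/-- The probability (over the randomness of the inherently probabilistic test `D`, whose
acceptance probability function is `D1`) that the circuit `A_{j,r,r',d}` outputs `f(x)` on
input `x`: the circuit forms the seed `s` with `s|_{S_{j+1}} = x` and remaining coordinates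
`r'`, computes `NW^f(s)_1, …, NW^f(s)_j`, samples `b ∼ D(NW^f(s)_1,…,NW^f(s)_j, r_1,…,r_{t-j})`
and outputs `r_1 ⊕ d` if `b = 1` and `r_1 ⊕ d ⊕ 1` otherwise. -/
noncomputable def nwAprob {n m t : ℕ} (f : (Fin n → Bool) → Bool)
    (S : Fin t → Finset (Fin m)) (hS : ∀ i, (S i).card = n)
    (D1 : (Fin t → Bool) → ℝ) (j : ℕ) (hj : j < t) (d : Bool)
    (r : Fin (t - j) → Bool) (r' : Fin (m - n) → Bool) (x : Fin n → Bool) : ℝ :=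
  let s : Fin m → Bool := nwSeed S hS ⟨j, hj⟩ x r'
  let inp : Fin t → Bool := fun i =>
    if h : (i : ℕ) < j then NWgen f S hS s i
    else r ⟨(i : ℕ) - j, by have hi := i.isLt; omega⟩
  if f x = Bool.xor (r ⟨0, by omega⟩) d then D1 inp else 1 - D1 inp

/-!
Hybrid argument and Yao's next-bit predictor. Let `P j` be the acceptance probability of `D` on
the hybrid whose first `j` bits are those of `NW^f(s)` and whose other `t - j` bits are uniform;
`P 0` and `P t` are the two probabilities in the hypothesis, so `|P (j + 1) - P j| ≥ γ / t` for
some `j`. The seed `s(x, r')` is uniform when `x` and `r'` are, and bit `j + 1` of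
`NW^f(s(x, r'))` is `f x`; hence the predictor that outputs `r_1 ⊕ d` when `D` accepts and its
negation otherwise is correct with probability `1/2 ± (P (j + 1) - P j)` on average over
`r, r', x`, the sign being set by `d`. A reverse Markov inequality turns this average advantage
`γ / t` into advantage `γ / (2t)` for a `γ / t` fraction of the pairs `(r, r')`.
-/

open scoped BigOperators

theorem exists_div_le_abs_sub_succ {γ : ℝ} (hγ : 0 < γ) (H : ℕ → ℝ) {t : ℕ}
    (h : γ ≤ |H t - H 0|) : ∃ j < t, γ / t ≤ |H (j + 1) - H j| := by
  have hsum : γ ≤ ∑ j ∈ range t, |H (j + 1) - H j| := by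
    rw [← sum_range_sub] at h
    exact h.trans (abs_sum_le_sum_abs _ _)
  have ht : t ≠ 0 := by
    rintro rfl
    simp only [range_zero, sum_empty] at hsum
    linarith
  have hconst : ∑ _j ∈ range t, γ / t = γ := by
    rw [sum_const, card_range, nsmul_eq_mul, mul_div_cancel₀ _ (Nat.cast_ne_zero.mpr ht)]
  obtain ⟨j, hj, hle⟩ := exists_le_of_sum_le (nonempty_range_iff.mpr ht)
    (f := fun _ => γ / t) (g := fun j => |H (j + 1) - H j|) (hconst.trans_le hsum)
  exact ⟨j, mem_range.mp hj, hle⟩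

theorem expect_fin_bool_eq_sum_div (k : ℕ) (g : (Fin k → Bool) → ℝ) :
    𝔼 x, g x = (∑ x, g x) / 2 ^ k := by
  simp [Fintype.expect_eq_sum_div_card]

theorem expect_univ_prod {α β M : Type*} [Fintype α] [Fintype β] [AddCommMonoid M]
    [Module ℚ≥0 M] (F : α × β → M) : 𝔼 p, F p = 𝔼 a, 𝔼 b, F (a, b) := by
  rw [← univ_product_univ, expect_product]

theorem expect_half_add_mul_sub {α : Type*} [Fintype α] [Nonempty α] (c : ℝ)
    (X Y : α → ℝ) :
    𝔼 a, (1 / 2 + c * (X a - Y a)) = 1 / 2 + c * (𝔼 a, X a - 𝔼 a, Y a) := by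
  rw [expect_add_distrib, Fintype.expect_const, ← mul_expect, expect_sub_distrib]

theorem expect_sub_le_mul_card_filter_le_div {α : Type*} [Fintype α] [Nonempty α]
    (v : α → ℝ) (hv : ∀ p, v p ≤ 1) (a : ℝ) :
    𝔼 p, v p - a ≤ (1 - a) * (#{p | a ≤ v p} / Fintype.card α) := by
  have hN : (0 : ℝ) < Fintype.card α := by exact_mod_cast Fintype.card_pos
  have hsplit : ∑ p, v p ≤ #{p | a ≤ v p} + a * #{p | ¬ a ≤ v p} := by
    rw [← sum_filter_add_sum_filter_not univ (fun p => a ≤ v p)]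
    gcongr
    · exact (sum_le_card_nsmul _ _ 1 fun p _ => hv p).trans (by simp)
    · exact (sum_le_card_nsmul _ _ a fun p hp => (not_le.mp (mem_filter.mp hp).2).le).trans
        (by rw [nsmul_eq_mul, mul_comm])
  have hcard : (#{p | ¬ a ≤ v p} : ℝ) = Fintype.card α - #{p | a ≤ v p} := by
    rw [eq_sub_iff_add_eq', ← Nat.cast_add, card_filter_add_card_filter_not, card_univ]
  rw [hcard] at hsplit
  rw [Fintype.expect_eq_sum_div_card, mul_div_assoc', div_sub' hN.ne',
    div_le_div_iff_of_pos_right hN]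
  linarith

theorem le_card_filter_div_of_half_add_le_expect {α : Type*} [Fintype α] [Nonempty α]
    (v : α → ℝ) (hv : ∀ p, v p ≤ 1) {ε : ℝ} (hε : 0 ≤ ε)
    (h : 1 / 2 + ε ≤ 𝔼 p, v p) :
    ε ≤ #{p | 1 / 2 + ε / 2 ≤ v p} / Fintype.card α := by
  have hmarkov := expect_sub_le_mul_card_filter_le_div v hv (1 / 2 + ε / 2)
  have hQ : (0 : ℝ) ≤ #{p | 1 / 2 + ε / 2 ≤ v p} / Fintype.card α := by positivity
  nlinarith [mul_nonneg hε hQ]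

theorem exists_bool_ite_mul_eq_abs (x : ℝ) :
    ∃ d : Bool, (if d then -1 else 1) * x = |x| := by
  rcases lt_or_ge x 0 with hx | hx
  · exact ⟨true, by simp [abs_of_neg hx]⟩
  · exact ⟨false, by simp [abs_of_nonneg hx]⟩

theorem expect_bool_ite_xor (g : Bool → ℝ) (u d : Bool) :
    𝔼 b, (if u = (b ^^ d) then g b else 1 - g b) =
      1 / 2 + (if d then -1 else 1) * (g u - 𝔼 b, g b) := by
  simp only [Fintype.expect_eq_sum_div_card, Fintype.sum_bool, Fintype.card_bool]
  cases u <;> cases d <;> simp <;> ring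

-- `Fin.cons` on bit strings, with the length given by an equation so that it applies to
-- `Fin (t - j)` without casts.
def consBitsEquiv {k l : ℕ} (h : l + 1 = k) : Bool × (Fin l → Bool) ≃ (Fin k → Bool) :=
  (Fin.consEquiv fun _ => Bool).trans (Equiv.arrowCongr (finCongr h) (Equiv.refl Bool))

theorem consBitsEquiv_apply {k l : ℕ} (h : l + 1 = k) (b : Bool) (w : Fin l → Bool)
    (i : Fin k) :
    consBitsEquiv h (b, w) i = if hi : (i : ℕ) = 0 then b else w ⟨i - 1, by omega⟩ := by
  subst h
  cases i using Fin.cases <;> simp [consBitsEquiv]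

section NisanWigderson

variable {n m t : ℕ} (f : (Fin n → Bool) → Bool) (S : Fin t → Finset (Fin m))
  (hS : ∀ i, (S i).card = n) (D1 : (Fin t → Bool) → ℝ)

noncomputable def nwSeedEquiv (j : Fin t) :
    (Fin n → Bool) × (Fin (m - n) → Bool) ≃ (Fin m → Bool) :=
  ((((S j).orderIsoOfFin (hS j)).toEquiv.arrowCongr (Equiv.refl Bool)).prodCongr
    ((((S j)ᶜ.orderIsoOfFin (by rw [card_compl, hS j, Fintype.card_fin])).toEquiv.trans
      (Equiv.subtypeEquivRight fun _ => mem_compl)).arrowCongr (Equiv.refl Bool))).trans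
    (Equiv.piEquivPiSubtypeProd (· ∈ S j) fun _ => Bool).symm

theorem nwSeedEquiv_apply (j : Fin t) (x : Fin n → Bool) (r' : Fin (m - n) → Bool) :
    nwSeedEquiv S hS j (x, r') = nwSeed S hS j x r' := rfl

theorem NWgen_nwSeed_self (j : Fin t) (x : Fin n → Bool) (r' : Fin (m - n) → Bool) :
    NWgen f S hS (nwSeed S hS j x r') j = f x := by
  simp only [NWgen, nwSeed, coe_mem, dif_pos, Subtype.coe_eta, OrderIso.symm_apply_apply]

noncomputable def hybrid (j : ℕ) (s : Fin m → Bool) (r : Fin (t - j) → Bool) :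
    Fin t → Bool :=
  fun i => if h : (i : ℕ) < j then NWgen f S hS s i else r ⟨i - j, by omega⟩

theorem hybrid_consBitsEquiv {j : ℕ} (hj : j < t) (s : Fin m → Bool)
    (w : Fin (t - (j + 1)) → Bool) :
    hybrid f S hS j s (consBitsEquiv (by omega) (NWgen f S hS s ⟨j, hj⟩, w)) =
      hybrid f S hS (j + 1) s w := by
  funext i
  simp only [hybrid, consBitsEquiv_apply]
  split_ifs <;> first
    | rfl
    | omega
    | exact congrArg _ (Fin.ext (by simp only; omega))

noncomputable def hybridAcceptance (j : ℕ) : ℝ :=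
  𝔼 s, 𝔼 r, D1 (hybrid f S hS j s r)

theorem hybridAcceptance_zero : hybridAcceptance f S hS D1 0 = 𝔼 y, D1 y := by
  simp only [hybridAcceptance]
  exact Fintype.expect_const (𝔼 y, D1 y)

theorem hybridAcceptance_self :
    hybridAcceptance f S hS D1 t = 𝔼 s, D1 (NWgen f S hS s) := by
  have h s r : hybrid f S hS t s r = NWgen f S hS s := funext fun i => dif_pos i.is_lt
  simp only [hybridAcceptance, h, Fintype.expect_const]

theorem nwAprob_eq_ite_hybrid {j : ℕ} (hj : j < t) (d : Bool) (r : Fin (t - j) → Bool)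
    (r' : Fin (m - n) → Bool) (x : Fin n → Bool) :
    nwAprob f S hS D1 j hj d r r' x =
      if f x = (r ⟨0, by omega⟩ ^^ d) then D1 (hybrid f S hS j (nwSeed S hS ⟨j, hj⟩ x r') r)
      else 1 - D1 (hybrid f S hS j (nwSeed S hS ⟨j, hj⟩ x r') r) := rfl

theorem nwAprob_le_one (hD1 : ∀ z, 0 ≤ D1 z ∧ D1 z ≤ 1) {j : ℕ} (hj : j < t) (d : Bool)
    (r : Fin (t - j) → Bool) (r' : Fin (m - n) → Bool) (x : Fin n → Bool) :
    nwAprob f S hS D1 j hj d r r' x ≤ 1 := by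
  rw [nwAprob_eq_ite_hybrid]
  split_ifs
  exacts [(hD1 _).2, by linarith [(hD1 (hybrid f S hS j (nwSeed S hS ⟨j, hj⟩ x r') r)).1]]

theorem expect_hybrid_predictor {j : ℕ} (hj : j < t) (d : Bool) (s : Fin m → Bool) :
    𝔼 r : Fin (t - j) → Bool,
      (if NWgen f S hS s ⟨j, hj⟩ = (r ⟨0, by omega⟩ ^^ d)
        then D1 (hybrid f S hS j s r) else 1 - D1 (hybrid f S hS j s r)) =
      1 / 2 + (if d then -1 else 1) *
        (𝔼 w, D1 (hybrid f S hS (j + 1) s w) - 𝔼 r, D1 (hybrid f S hS j s r)) := by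
  set e := consBitsEquiv (show t - (j + 1) + 1 = t - j by omega)
  have hsplit (F : (Fin (t - j) → Bool) → ℝ) :
      𝔼 r, F r = 𝔼 w, 𝔼 b, F (e (b, w)) := by
    rw [← Fintype.expect_equiv e (F ∘ e) F fun _ => rfl, expect_univ_prod, expect_comm]
    rfl
  rw [hsplit, hsplit fun r => D1 (hybrid f S hS j s r), ← expect_half_add_mul_sub]
  refine expect_congr rfl fun w _ => ?_
  simp only [e, consBitsEquiv_apply, dif_pos]
  rw [expect_bool_ite_xor (fun b => D1 (hybrid f S hS j s (consBitsEquiv _ (b, w)))),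
    hybrid_consBitsEquiv]

theorem expect_nwAprob {j : ℕ} (hj : j < t) (d : Bool) :
    𝔼 p : (Fin (t - j) → Bool) × (Fin (m - n) → Bool),
        𝔼 x, nwAprob f S hS D1 j hj d p.1 p.2 x =
      1 / 2 + (if d then -1 else 1) *
        (hybridAcceptance f S hS D1 (j + 1) - hybridAcceptance f S hS D1 j) := by
  calc 𝔼 p : (Fin (t - j) → Bool) × (Fin (m - n) → Bool),
        𝔼 x, nwAprob f S hS D1 j hj d p.1 p.2 x
      = 𝔼 q : (Fin n → Bool) × (Fin (m - n) → Bool), 𝔼 r,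
          nwAprob f S hS D1 j hj d r q.2 q.1 := by
        rw [expect_univ_prod, expect_univ_prod]
        conv_lhs => rw [expect_comm]; arg 2; ext r'; rw [expect_comm]
        rw [expect_comm]
    _ = 𝔼 s, 𝔼 r : Fin (t - j) → Bool,
          (if NWgen f S hS s ⟨j, hj⟩ = (r ⟨0, by omega⟩ ^^ d)
            then D1 (hybrid f S hS j s r) else 1 - D1 (hybrid f S hS j s r)) := by
        refine Fintype.expect_equiv (nwSeedEquiv S hS ⟨j, hj⟩) _ _ fun ⟨x, r'⟩ => ?_
        simp only [nwSeedEquiv_apply, nwAprob_eq_ite_hybrid, NWgen_nwSeed_self]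
    _ = _ := by
        simp only [expect_hybrid_predictor, expect_half_add_mul_sub, hybridAcceptance]

end NisanWigderson

theorem nw_reconstruction_general {n m t : ℕ}
    (f : (Fin n → Bool) → Bool)
    (S : Fin t → Finset (Fin m)) (hS : ∀ i, (S i).card = n)
    (D1 : (Fin t → Bool) → ℝ) (hD1 : ∀ z, 0 ≤ D1 z ∧ D1 z ≤ 1)
    (γ : ℝ) (hγ : 0 < γ)
    (hdist : γ ≤
      |(∑ s : Fin m → Bool, D1 (NWgen f S hS s)) / 2 ^ m -
        (∑ y : Fin t → Bool, D1 y) / 2 ^ t|) :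
    ∃ j : ℕ, ∃ hj : j < t, ∃ d : Bool,
      γ / t ≤
        (((Finset.univ : Finset ((Fin (t - j) → Bool) × (Fin (m - n) → Bool))).filter
              (fun p =>
                1 / 2 + γ / (2 * t) ≤
                  (∑ x : Fin n → Bool, nwAprob f S hS D1 j hj d p.1 p.2 x) / 2 ^ n)).card : ℝ) /
          (2 ^ (t - j) * 2 ^ (m - n)) := by
  obtain ⟨j, hj, hgap⟩ := exists_div_le_abs_sub_succ hγ (hybridAcceptance f S hS D1) <| by
    rwa [hybridAcceptance_self, hybridAcceptance_zero, expect_fin_bool_eq_sum_div,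
      expect_fin_bool_eq_sum_div]
  obtain ⟨d, hd⟩ := exists_bool_ite_mul_eq_abs
    (hybridAcceptance f S hS D1 (j + 1) - hybridAcceptance f S hS D1 j)
  refine ⟨j, hj, d, ?_⟩
  have hv (p : (Fin (t - j) → Bool) × (Fin (m - n) → Bool)) :
      (∑ x, nwAprob f S hS D1 j hj d p.1 p.2 x) / 2 ^ n ≤ 1 := by
    rw [← expect_fin_bool_eq_sum_div]
    exact expect_le univ_nonempty fun x _ => nwAprob_le_one f S hS D1 hD1 hj d p.1 p.2 x
  have hmean : 1 / 2 + γ / t ≤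
      𝔼 p : (Fin (t - j) → Bool) × (Fin (m - n) → Bool),
        (∑ x, nwAprob f S hS D1 j hj d p.1 p.2 x) / 2 ^ n := by
    simp only [← expect_fin_bool_eq_sum_div, expect_nwAprob, hd]
    linarith
  have h := le_card_filter_div_of_half_add_le_expect _ hv (by positivity) hmean
  rwa [div_div, mul_comm (t : ℝ), Fintype.card_prod, Fintype.card_fun, Fintype.card_fun,
    Fintype.card_bool, Fintype.card_fin, Fintype.card_fin, Nat.cast_mul, Nat.cast_pow,
    Nat.cast_pow, Nat.cast_ofNat] at h

/-- **Nisan–Wigderson reconstruction.** If an inherently probabilistic test `D`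
(with acceptance probability function `D1`) `γ`-distinguishes the output of `NW^f` on a
uniform seed from a uniform `t`-bit string, then there are `j ∈ {0,…,t-1}` and `d ∈ {0,1}`
such that with probability at least `γ/t` over independent uniform `r ∈ {0,1}^{t-j}` and
`r' ∈ {0,1}^{m-n}`, the circuit `A_{j,r,r',d}` computes `f` with advantage `γ/(2t)` on a
uniformly random input `x ∈ {0,1}^n`. -/
theorem nw_reconstruction {n m t c : ℕ}
    (hn : 0 < n) (hnt : n ≤ t) (ht : t ≤ 2 ^ n) (hc : 1 ≤ c) (hm : m = c * n ^ 2)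
    (f : (Fin n → Bool) → Bool)
    (S : Fin t → Finset (Fin m)) (hS : ∀ i, (S i).card = n)
    (hdes : ∀ i j : Fin t, i ≠ j → ((S i ∩ S j).card : ℝ) ≤ Real.logb 2 t)
    (D1 : (Fin t → Bool) → ℝ) (hD1 : ∀ z, 0 ≤ D1 z ∧ D1 z ≤ 1)
    (γ : ℝ) (hγ : 0 < γ)
    (hdist : γ ≤
      |(∑ s : Fin m → Bool, D1 (NWgen f S hS s)) / 2 ^ m -
        (∑ y : Fin t → Bool, D1 y) / 2 ^ t|) :
    ∃ j : ℕ, ∃ hj : j < t, ∃ d : Bool,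
      γ / t ≤
        (((Finset.univ : Finset ((Fin (t - j) → Bool) × (Fin (m - n) → Bool))).filter
              (fun p =>
                1 / 2 + γ / (2 * t) ≤
                  (∑ x : Fin n → Bool, nwAprob f S hS D1 j hj d p.1 p.2 x) / 2 ^ n)).card : ℝ) /
          (2 ^ (t - j) * 2 ^ (m - n)) :=
  nw_reconstruction_general f S hS D1 hD1 γ hγ hdist
end

section
/- Let (A,B) ∈ I be a (γ,η)-good edge. Then: (i) for every 0 ≤ i ≤ ℓ, if Γ_i is small (i.e., |Γ_i| < (γη)^5·|N_I(A)|), then Pr_{B'∼W_I(A)}[B' ∈ Γ_i] ≤ (γη)^4; and (ii) for the exceptional bucket, Pr_{B'∼W_I(A)}[B' ∈ Γ_{ℓ+1}] ≤ (γη)^4. -/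
open Finset
open scoped Classical
namespace IJKW
noncomputable def prEvent {n : ℕ} (D : ((Fin n → Bool) → Bool) → ℝ)
    (E : ((Fin n → Bool) → Bool) → Prop) : ℝ :=
  ∑ v : (Fin n → Bool) → Bool, if E v then D v else 0
def Sk (n k : ℕ) : Finset (Finset (Fin n → Bool)) :=
  Finset.univ.filter fun B => B.card = k
noncomputable def Corr {n : ℕ} (g : (Fin n → Bool) → Bool)
    (G : Finset (Fin n → Bool) → ((Fin n → Bool) → Bool) → ℝ)
    (B : Finset (Fin n → Bool)) : ℝ :=
  prEvent (G B) fun v => ∀ x ∈ B, v x = g x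
def NI (n k : ℕ) (A : Finset (Fin n → Bool)) : Finset (Finset (Fin n → Bool)) :=
  (Sk n k).filter fun B => A ⊆ B
def NIx (n k : ℕ) (A : Finset (Fin n → Bool)) (x : Fin n → Bool) :
    Finset (Finset (Fin n → Bool)) :=
  (Sk n k).filter fun B => A ⊆ B ∧ x ∈ B
def Edges (n k : ℕ) : Finset (Finset (Fin n → Bool) × Finset (Fin n → Bool)) :=
  Finset.univ.filter fun p => p.1.card = k / 2 ∧ p.2.card = k ∧ p.1 ⊆ p.2
noncomputable def pcons {n : ℕ} (g : (Fin n → Bool) → Bool)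
    (G : Finset (Fin n → Bool) → ((Fin n → Bool) → Bool) → ℝ)
    (A B : Finset (Fin n → Bool)) : ℝ :=
  prEvent (G B) fun v => ∀ a ∈ A, v a = g a
def IsGood {n : ℕ} (g : (Fin n → Bool) → Bool)
    (G : Finset (Fin n → Bool) → ((Fin n → Bool) → Bool) → ℝ)
    (k : ℕ) (γ η : ℝ) (A B : Finset (Fin n → Bool)) : Prop :=
  η ≤ Corr g G B ∧
    γ ≤ (((NI n k A).filter fun B' => η ≤ Corr g G B').card : ℝ) / ((NI n k A).card : ℝ)

/-- `p_tot(A) = ∑_{B' ∈ N_I(A)} p_cons(B')`. -/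
noncomputable def ptot {n : ℕ} (g : (Fin n → Bool) → Bool)
    (G : Finset (Fin n → Bool) → ((Fin n → Bool) → Bool) → ℝ)
    (k : ℕ) (A : Finset (Fin n → Bool)) : ℝ :=
  ∑ B ∈ NI n k A, pcons g G A B

/-- Expectation of `F` under the distribution `W_I(A)`, which assigns `B' ∈ N_I(A)` the
probability `p_cons(B') / p_tot(A)`. -/
noncomputable def Wexp {n : ℕ} (g : (Fin n → Bool) → Bool)
    (G : Finset (Fin n → Bool) → ((Fin n → Bool) → Bool) → ℝ)
    (k : ℕ) (A : Finset (Fin n → Bool)) (F : Finset (Fin n → Bool) → ℝ) : ℝ :=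
  (∑ B ∈ NI n k A, pcons g G A B * F B) / ptot g G k A

/-- `p_err(x, B') = Pr_{v ∼ 𝒢(B')}[v|_x ≠ g(x) ∣ v|_A = g^{k/2}(A)]`. -/
noncomputable def perr {n : ℕ} (g : (Fin n → Bool) → Bool)
    (G : Finset (Fin n → Bool) → ((Fin n → Bool) → Bool) → ℝ)
    (A : Finset (Fin n → Bool)) (x : Fin n → Bool) (B : Finset (Fin n → Bool)) : ℝ :=
  prEvent (G B) (fun v => v x ≠ g x ∧ ∀ a ∈ A, v a = g a) / pcons g G A B

/-- `ErrCons(A, B') = E_{x ∼ uniform on B'∖A}[p_err(x, B')]`. -/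
noncomputable def ErrCons {n : ℕ} (g : (Fin n → Bool) → Bool)
    (G : Finset (Fin n → Bool) → ((Fin n → Bool) → Bool) → ℝ)
    (A B : Finset (Fin n → Bool)) : ℝ :=
  (∑ x ∈ B \ A, perr g G A x B) / ((B \ A).card : ℝ)

/-- An edge `(A,B)` is `(γ,η,α)`-excellent if it is `(γ,η)`-good and
`E_{B' ∼ W_I(A)}[ErrCons(A,B')] ≤ α`. -/
def IsExcellent {n : ℕ} (g : (Fin n → Bool) → Bool)
    (G : Finset (Fin n → Bool) → ((Fin n → Bool) → Bool) → ℝ)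
    (k : ℕ) (γ η α : ℝ) (A B : Finset (Fin n → Bool)) : Prop :=
  IsGood g G k γ η A B ∧ Wexp g G k A (fun B' => ErrCons g G A B') ≤ α

/-- `p_tot(x) = ∑_{B ∈ N_I(A,x)} p_cons(B)`. -/
noncomputable def ptotx {n : ℕ} (g : (Fin n → Bool) → Bool)
    (G : Finset (Fin n → Bool) → ((Fin n → Bool) → Bool) → ℝ)
    (k : ℕ) (A : Finset (Fin n → Bool)) (x : Fin n → Bool) : ℝ :=
  ∑ B ∈ NIx n k A x, pcons g G A B

/-- `h(x) = ∑_{B ∈ N_I(A,x)} p_err(x,B) · p_used(x,B)` with `p_used(x,B) = p_cons(B)/p_tot(x)`. -/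
noncomputable def hFn {n : ℕ} (g : (Fin n → Bool) → Bool)
    (G : Finset (Fin n → Bool) → ((Fin n → Bool) → Bool) → ℝ)
    (k : ℕ) (A : Finset (Fin n → Bool)) (x : Fin n → Bool) : ℝ :=
  ∑ B ∈ NIx n k A x, perr g G A x B * (pcons g G A B / ptotx g G k A x)

/-- `μ(B') = E_{x ∼ uniform on B'∖A}[h(x)]`. -/
noncomputable def muFn {n : ℕ} (g : (Fin n → Bool) → Bool)
    (G : Finset (Fin n → Bool) → ((Fin n → Bool) → Bool) → ℝ)
    (k : ℕ) (A B' : Finset (Fin n → Bool)) : ℝ :=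
  (∑ x ∈ B' \ A, hFn g G k A x) / ((B' \ A).card : ℝ)

/-- The bucket `Γ_i = {B' ∈ N_I(A) : 2^{-i-1} < p_cons(B') ≤ 2^{-i}}`. -/
noncomputable def Gam {n : ℕ} (g : (Fin n → Bool) → Bool)
    (G : Finset (Fin n → Bool) → ((Fin n → Bool) → Bool) → ℝ)
    (k : ℕ) (A : Finset (Fin n → Bool)) (i : ℕ) : Finset (Finset (Fin n → Bool)) :=
  (NI n k A).filter fun B' =>
    ((2 : ℝ) ^ (i + 1))⁻¹ < pcons g G A B' ∧ pcons g G A B' ≤ ((2 : ℝ) ^ i)⁻¹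

/-- The exceptional bucket `Γ_{ℓ+1} = {B' ∈ N_I(A) : p_cons(B') ≤ 2^{-ℓ-1}}`, where
`ℓ = ⌈5·log₂(1/(γη))⌉`. -/
noncomputable def GamTop {n : ℕ} (g : (Fin n → Bool) → Bool)
    (G : Finset (Fin n → Bool) → ((Fin n → Bool) → Bool) → ℝ)
    (k : ℕ) (A : Finset (Fin n → Bool)) (γ η : ℝ) : Finset (Finset (Fin n → Bool)) :=
  (NI n k A).filter fun B' =>
    pcons g G A B' ≤ ((2 : ℝ) ^ (⌈5 * Real.logb 2 (1 / (γ * η))⌉₊ + 1))⁻¹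

/-- The probability that one iteration of the decoder `C_{A,w}` on input `x ∉ A` halts,
i.e. that for `B'` uniform on `N_I(A,x)` and `v ∼ 𝒢(B')` we have `v|_A = w`. -/
noncomputable def phalt {n : ℕ}
    (G : Finset (Fin n → Bool) → ((Fin n → Bool) → Bool) → ℝ)
    (k : ℕ) (A : Finset (Fin n → Bool)) (w : (Fin n → Bool) → Bool) (x : Fin n → Bool) : ℝ :=
  (∑ B ∈ NIx n k A x, prEvent (G B) fun v => ∀ a ∈ A, v a = w a) / ((NIx n k A x).card : ℝ)

/-- The probability that one iteration of the decoder `C_{A,w}` on input `x ∉ A` halts with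
output bit `b`. -/
noncomputable def phaltBit {n : ℕ}
    (G : Finset (Fin n → Bool) → ((Fin n → Bool) → Bool) → ℝ)
    (k : ℕ) (A : Finset (Fin n → Bool)) (w : (Fin n → Bool) → Bool) (x : Fin n → Bool)
    (b : Bool) : ℝ :=
  (∑ B ∈ NIx n k A x, prEvent (G B) fun v => (∀ a ∈ A, v a = w a) ∧ v x = b) /
    ((NIx n k A x).card : ℝ)

/-- The probability that the randomized decoder `C_{A,w}` with `T` iterations outputs the
bit `b` on input `x`.  For `x ∈ A` it deterministically outputs `w|_x`; otherwise, the `i`-th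
iteration is reached with probability `(1 - phalt)^{i-1}` and halts with output `b` with
probability `phaltBit b`. -/
noncomputable def probOutEq {n : ℕ}
    (G : Finset (Fin n → Bool) → ((Fin n → Bool) → Bool) → ℝ)
    (k : ℕ) (A : Finset (Fin n → Bool)) (T : ℕ) (w : (Fin n → Bool) → Bool)
    (x : Fin n → Bool) (b : Bool) : ℝ :=
  if x ∈ A then (if w x = b then 1 else 0)
  else phaltBit G k A w x b * ∑ i ∈ Finset.range T, (1 - phalt G k A w x) ^ i

/-- The probability that the randomized decoder `C_{A,w}` with `T` iterations outputs `⊥`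
on input `x`. -/
noncomputable def probOutBot {n : ℕ}
    (G : Finset (Fin n → Bool) → ((Fin n → Bool) → Bool) → ℝ)
    (k : ℕ) (A : Finset (Fin n → Bool)) (T : ℕ) (w : (Fin n → Bool) → Bool)
    (x : Fin n → Bool) : ℝ :=
  if x ∈ A then 0 else (1 - phalt G k A w x) ^ T

/-- `B''` is `A`-heavy: `Pr_{v ∼ 𝒢(B''), x ∼ uniform on B''∖A}[v|_x ≠ g(x) ∣ v|_A = g^{k/2}(A)]
  > α/2`. -/
noncomputable def IsHeavy {n : ℕ} (g : (Fin n → Bool) → Bool)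
    (G : Finset (Fin n → Bool) → ((Fin n → Bool) → Bool) → ℝ)
    (A : Finset (Fin n → Bool)) (α : ℝ) (B'' : Finset (Fin n → Bool)) : Prop :=
  α / 2 <
    ((∑ x ∈ B'' \ A, prEvent (G B'') fun v => v x ≠ g x ∧ ∀ a ∈ A, v a = g a) /
        ((B'' \ A).card : ℝ)) / pcons g G A B''

/-!
Every `B' ∈ N_I(A)` contains `A`, so `p_cons(B') ≥ Corr(B')`; by goodness at least `γ·|N_I(A)|`
of them have `Corr ≥ η`, hence `p_tot(A) ≥ γη·|N_I(A)|`. A bucket therefore has weight at most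
`(γη)⁴` as soon as its total `p_cons` mass is at most `(γη)⁵·|N_I(A)|`. For a small bucket this
holds because `p_cons ≤ 1` on it, and for the exceptional one because `p_cons ≤ 2^{-ℓ-1} ≤ (γη)⁵`
on it.
-/

lemma prEvent_nonneg {n : ℕ} {D : ((Fin n → Bool) → Bool) → ℝ} (hD : ∀ v, 0 ≤ D v)
    (E : ((Fin n → Bool) → Bool) → Prop) : 0 ≤ prEvent D E :=
  Finset.sum_nonneg fun v _ => by split_ifs <;> simp [hD v]

lemma prEvent_mono {n : ℕ} {D : ((Fin n → Bool) → Bool) → ℝ} (hD : ∀ v, 0 ≤ D v)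
    {E₁ E₂ : ((Fin n → Bool) → Bool) → Prop} (h : ∀ v, E₁ v → E₂ v) :
    prEvent D E₁ ≤ prEvent D E₂ :=
  Finset.sum_le_sum fun v _ => by
    by_cases h₁ : E₁ v
    · simp [h₁, h v h₁]
    · split_ifs <;> simp [hD v]

lemma Corr_le_pcons {n : ℕ} {g : (Fin n → Bool) → Bool}
    {G : Finset (Fin n → Bool) → ((Fin n → Bool) → Bool) → ℝ} {A B : Finset (Fin n → Bool)}
    (hG : ∀ v, 0 ≤ G B v) (hAB : A ⊆ B) : Corr g G B ≤ pcons g G A B :=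
  prEvent_mono hG fun _ hv a ha => hv a (hAB ha)

lemma inv_two_pow_ceil_logb_le {x : ℝ} (hx : 0 < x) (m : ℕ) :
    ((2 : ℝ) ^ ⌈m * Real.logb 2 (1 / x)⌉₊)⁻¹ ≤ x ^ m := by
  have h : (1 / x) ^ m ≤ (2 : ℝ) ^ ⌈m * Real.logb 2 (1 / x)⌉₊ := by
    rw [← Real.rpow_natCast (2 : ℝ), ← Real.logb_le_iff_le_rpow one_lt_two (by positivity),
      Real.logb_pow]
    exact Nat.le_ceil _
  rw [one_div] at h ⊢
  rwa [inv_pow, inv_le_comm₀ (by positivity) (by positivity)] at h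

section Buckets

variable {n k : ℕ} {g : (Fin n → Bool) → Bool}
  {G : Finset (Fin n → Bool) → ((Fin n → Bool) → Bool) → ℝ} {γ η : ℝ}
  {A B : Finset (Fin n → Bool)}

lemma mul_card_NI_le_ptot (hG : ∀ B' ∈ NI n k A, ∀ v, 0 ≤ G B' v) (hη : 0 ≤ η)
    (hgood : IsGood g G k γ η A B) : γ * η * #(NI n k A) ≤ ptot g G k A := by
  set S := (NI n k A).filter fun B' => η ≤ Corr g G B'
  have hS : γ * #(NI n k A) ≤ #S :=
    mul_le_of_le_div₀ (Nat.cast_nonneg _) (Nat.cast_nonneg _) hgood.2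
  calc γ * η * #(NI n k A) = η * (γ * #(NI n k A)) := by ring
    _ ≤ #S • η := by rw [nsmul_eq_mul, mul_comm]; gcongr
    _ ≤ ∑ B' ∈ S, pcons g G A B' := Finset.card_nsmul_le_sum _ _ _ fun B' hB' => by
        obtain ⟨hB'N, hηB'⟩ := Finset.mem_filter.1 hB'
        exact hηB'.trans (Corr_le_pcons (hG B' hB'N) (Finset.mem_filter.1 hB'N).2)
    _ ≤ ptot g G k A := Finset.sum_le_sum_of_subset_of_nonneg (Finset.filter_subset _ _)
        fun B' hB' _ => prEvent_nonneg (hG B' hB') _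

lemma sum_pcons_div_ptot_le (hG : ∀ B' ∈ NI n k A, ∀ v, 0 ≤ G B' v) (hγ : 0 ≤ γ)
    (hη : 0 ≤ η) (hgood : IsGood g G k γ η A B) {s : Finset (Finset (Fin n → Bool))}
    (hs : ∑ B' ∈ s, pcons g G A B' ≤ (γ * η) ^ 5 * #(NI n k A)) :
    (∑ B' ∈ s, pcons g G A B') / ptot g G k A ≤ (γ * η) ^ 4 := by
  have hptot := mul_card_NI_le_ptot hG hη hgood
  refine div_le_of_le_mul₀ (le_trans (by positivity) hptot) (by positivity) ?_
  calc ∑ B' ∈ s, pcons g G A B' ≤ (γ * η) ^ 4 * (γ * η * #(NI n k A)) := by linarith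
    _ ≤ (γ * η) ^ 4 * ptot g G k A := by gcongr

lemma sum_pcons_Gam_le_card (i : ℕ) :
    ∑ B' ∈ Gam g G k A i, pcons g G A B' ≤ #(Gam g G k A i) := by
  calc ∑ B' ∈ Gam g G k A i, pcons g G A B' ≤ #(Gam g G k A i) • ((2 : ℝ) ^ i)⁻¹ :=
        Finset.sum_le_card_nsmul _ _ _ fun B' hB' => (Finset.mem_filter.1 hB').2.2
    _ ≤ #(Gam g G k A i) := by
        rw [nsmul_eq_mul]
        exact mul_le_of_le_one_right (Nat.cast_nonneg _)
          (inv_le_one_of_one_le₀ (one_le_pow₀ one_le_two))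

lemma sum_pcons_GamTop_le (hγη : 0 < γ * η) :
    ∑ B' ∈ GamTop g G k A γ η, pcons g G A B' ≤ (γ * η) ^ 5 * #(NI n k A) := by
  set l := ⌈5 * Real.logb 2 (1 / (γ * η))⌉₊
  have hl : ((2 : ℝ) ^ (l + 1))⁻¹ ≤ (γ * η) ^ 5 := by
    have h := inv_two_pow_ceil_logb_le hγη 5
    simp only [Nat.cast_ofNat] at h
    exact le_trans (inv_anti₀ (by positivity) (pow_le_pow_right₀ one_le_two l.le_succ)) h
  calc ∑ B' ∈ GamTop g G k A γ η, pcons g G A B'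
        ≤ #(GamTop g G k A γ η) • ((2 : ℝ) ^ (l + 1))⁻¹ :=
        Finset.sum_le_card_nsmul _ _ _ fun B' hB' => (Finset.mem_filter.1 hB').2
    _ ≤ #(NI n k A) * (γ * η) ^ 5 := by
        rw [nsmul_eq_mul]
        gcongr
        exact fun B' hB' => (Finset.mem_filter.1 hB').1
    _ = (γ * η) ^ 5 * #(NI n k A) := mul_comm _ _

end Buckets

theorem small_buckets_have_small_weight_general
    (n k : ℕ)
    (g : (Fin n → Bool) → Bool)
    (G : Finset (Fin n → Bool) → ((Fin n → Bool) → Bool) → ℝ)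
    (hGnn : ∀ B ∈ Sk n k, ∀ v, 0 ≤ G B v)
    (γ η : ℝ) (hγ : 0 < γ) (hη : 0 < η)
    (A B : Finset (Fin n → Bool))
    (hgood : IsGood g G k γ η A B) :
    (∀ i : ℕ, i ≤ ⌈5 * Real.logb 2 (1 / (γ * η))⌉₊ →
        ((Gam g G k A i).card : ℝ) < (γ * η) ^ 5 * ((NI n k A).card : ℝ) →
        (∑ B' ∈ Gam g G k A i, pcons g G A B') / ptot g G k A ≤ (γ * η) ^ 4) ∧
      (∑ B' ∈ GamTop g G k A γ η, pcons g G A B') / ptot g G k A ≤ (γ * η) ^ 4 := by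
  have hG : ∀ B' ∈ NI n k A, ∀ v, 0 ≤ G B' v :=
    fun B' hB' => hGnn B' (Finset.mem_filter.1 hB').1
  refine ⟨fun i _ hsmall => ?_, ?_⟩
  · exact sum_pcons_div_ptot_le hG hγ.le hη.le hgood
      ((sum_pcons_Gam_le_card i).trans hsmall.le)
  · exact sum_pcons_div_ptot_le hG hγ.le hη.le hgood (sum_pcons_GamTop_le (mul_pos hγ hη))

/-- Let `(A,B) ∈ I` be a `(γ,η)`-good edge.  Then (i) for every
`0 ≤ i ≤ ℓ` (with `ℓ = ⌈5·log₂(1/(γη))⌉`), if the bucket `Γ_i` is small (i.e.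
`|Γ_i| < (γη)^5·|N_I(A)|`), then `Pr_{B' ∼ W_I(A)}[B' ∈ Γ_i] ≤ (γη)^4`; and (ii) for the
exceptional bucket, `Pr_{B' ∼ W_I(A)}[B' ∈ Γ_{ℓ+1}] ≤ (γη)^4`. -/
theorem small_buckets_have_small_weight
    (n k : ℕ) (hn : 0 < n) (hk : 0 < k) (hkeven : Even k) (hk2 : k ≤ 2 ^ n)
    (g : (Fin n → Bool) → Bool)
    (G : Finset (Fin n → Bool) → ((Fin n → Bool) → Bool) → ℝ)
    (hGnn : ∀ B ∈ Sk n k, ∀ v, 0 ≤ G B v)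
    (hGsum : ∀ B ∈ Sk n k, ∑ v, G B v = 1)
    (hGpos : ∀ B ∈ Sk n k, 0 < Corr g G B)
    (γ η : ℝ) (hγ : 0 < γ) (hη : 0 < η)
    (A B : Finset (Fin n → Bool)) (hAB : (A, B) ∈ Edges n k)
    (hgood : IsGood g G k γ η A B) :
    (∀ i : ℕ, i ≤ ⌈5 * Real.logb 2 (1 / (γ * η))⌉₊ →
        ((Gam g G k A i).card : ℝ) < (γ * η) ^ 5 * ((NI n k A).card : ℝ) →
        (∑ B' ∈ Gam g G k A i, pcons g G A B') / ptot g G k A ≤ (γ * η) ^ 4) ∧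
      (∑ B' ∈ GamTop g G k A γ η, pcons g G A B') / ptot g G k A ≤ (γ * η) ^ 4 :=
  small_buckets_have_small_weight_general n k g G hGnn γ η hγ hη A B hgood

end IJKW
end
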